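/- arXiv:1710.01937 — 4 statements merged into one kernel-verified Lean document; each statement's English description precedes it below -/
import Mathlib

section
/- For symmetric tensors over a vector space, the contraction products commute: if k, l, s are positive integers with l ≤ k and s ≤ k − l, then for any h in the s-th symmetric power of the dual space V*, g in the l-th symmetric power of V*, and f in the k-th symmetric power of V, one has h ·_s (g ·_l f) = g ·_l (h ·_s f). -/
/-!  We model the symmetric algebra `S V` of `V = ℝ^d` concretely as the polynomial
algebra `ℝ[X_1,…,X_d]`: a vector `f ∈ V` corresponds to the linear polynomial
`lin f = ∑ x, f x • X x`, and the decomposable symmetric tensor `f^{⊙k}` to `(lin f)^k`.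
The `l`-contraction with the decomposable dual tensor `g^{⊙l} ∈ S^l V*` corresponds to the
constant-coefficient differential operator `(l!)⁻¹ • (Dop g)^l`, where
`Dop g = ∑ x, g x • ∂/∂X x`; indeed `(l!)⁻¹ (Dop g)^l (lin f)^k = C(k,l) ⟨g,f⟩^l (lin f)^{k-l}`,
the defining formula of the contraction product.  A general element of `S^l V*` then
corresponds (extension by linearity) to an operator in the span of the `(l!)⁻¹ • (Dop g)^l`. -/

/-- The linear polynomial modelling the vector `f ∈ V` inside the symmetric algebra. -/
noncomputable def lin {d : ℕ} (f : Fin d → ℝ) : MvPolynomial (Fin d) ℝ :=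
  ∑ x, MvPolynomial.C (f x) * MvPolynomial.X x

/-- The first-order contraction operator associated with the covector `g ∈ V*`. -/
noncomputable def Dop {d : ℕ} (g : Fin d → ℝ) :
    Module.End ℝ (MvPolynomial (Fin d) ℝ) :=
  ∑ x, g x • (MvPolynomial.pderiv x).toLinearMap

/-!
Every contraction operator lies in the algebra generated by the first-order operators `Dop a`,
and these commute because partial derivatives commute. Hence any two contraction operators
commute, whatever the degrees involved.
-/

namespace MvPolynomial

theorem pderiv_pderiv_comm {R σ : Type*} [CommSemiring R] (i j : σ) (p : MvPolynomial σ R) :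
    pderiv i (pderiv j p) = pderiv j (pderiv i p) := by
  induction p using MvPolynomial.induction_on' with
  | monomial m a =>
    rcases eq_or_ne i j with rfl | hij
    · rfl
    · simp only [pderiv_monomial, Finsupp.coe_tsub, Pi.sub_apply, ne_eq, hij, hij.symm,
        not_false_eq_true, Finsupp.single_eq_of_ne, tsub_zero]
      rw [tsub_right_comm, mul_right_comm]
  | add p q hp hq => simp [hp, hq]

end MvPolynomial

theorem Dop_commute {d : ℕ} (a b : Fin d → ℝ) : Commute (Dop a) (Dop b) :=
  .sum_left _ _ _ fun x _ => .sum_right _ _ _ fun y _ =>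
    ((Commute.smul_right (LinearMap.ext (MvPolynomial.pderiv_pderiv_comm x y ·)) _).smul_left _)

theorem commute_of_mem_adjoin_range_Dop {d : ℕ} {T U : Module.End ℝ (MvPolynomial (Fin d) ℝ)}
    (hT : T ∈ Algebra.adjoin ℝ (Set.range Dop)) (hU : U ∈ Algebra.adjoin ℝ (Set.range Dop)) :
    Commute T U := by
  refine Algebra.commute_of_mem_adjoin_of_forall_mem_commute hU ?_
  rintro _ ⟨b, rfl⟩
  refine (Algebra.commute_of_mem_adjoin_of_forall_mem_commute hT ?_).symm
  rintro _ ⟨a, rfl⟩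
  exact Dop_commute b a

theorem mem_adjoin_range_Dop_of_mem_span {d n : ℕ} {P : Module.End ℝ (MvPolynomial (Fin d) ℝ)}
    (hP : P ∈ Submodule.span ℝ {T | ∃ a : Fin d → ℝ, T = ((n.factorial : ℝ)⁻¹) • (Dop a) ^ n}) :
    P ∈ Algebra.adjoin ℝ (Set.range Dop) := by
  refine (Subalgebra.mem_toSubmodule _).mp <| Submodule.span_le.mpr ?_ hP
  rintro _ ⟨a, rfl⟩
  have hDop : Dop a ∈ Algebra.adjoin ℝ (Set.range Dop) := Algebra.subset_adjoin ⟨a, rfl⟩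
  exact Subalgebra.smul_mem _ (Subalgebra.pow_mem _ hDop n) _

theorem stmt0_general {d : ℕ} (l s : ℕ)
    (H G : Module.End ℝ (MvPolynomial (Fin d) ℝ))
    (hH : H ∈ Submodule.span ℝ
      {T | ∃ a : Fin d → ℝ, T = ((s.factorial : ℝ)⁻¹) • (Dop a) ^ s})
    (hG : G ∈ Submodule.span ℝ
      {T | ∃ b : Fin d → ℝ, T = ((l.factorial : ℝ)⁻¹) • (Dop b) ^ l})
    (f : MvPolynomial (Fin d) ℝ) :
    H (G f) = G (H f) :=
  LinearMap.congr_fun (commute_of_mem_adjoin_range_Dop (mem_adjoin_range_Dop_of_mem_span hH)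
    (mem_adjoin_range_Dop_of_mem_span hG)).eq f

/-- For `0 < l ≤ k` and `0 < s ≤ k - l`, the contraction products commute:
`h ·_s (g ·_l f) = g ·_l (h ·_s f)` for all `h ∈ S^s V*`, `g ∈ S^l V*`, `f ∈ S^k V`. -/
theorem stmt0 {d : ℕ} (k l s : ℕ) (hk : 0 < k) (hl : 0 < l) (hs : 0 < s)
    (hlk : l ≤ k) (hsk : s ≤ k - l)
    (H G : Module.End ℝ (MvPolynomial (Fin d) ℝ))
    (hH : H ∈ Submodule.span ℝ
      {T | ∃ a : Fin d → ℝ, T = ((s.factorial : ℝ)⁻¹) • (Dop a) ^ s})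
    (hG : G ∈ Submodule.span ℝ
      {T | ∃ b : Fin d → ℝ, T = ((l.factorial : ℝ)⁻¹) • (Dop b) ^ l})
    (f : MvPolynomial (Fin d) ℝ) (hf : f.IsHomogeneous k) :
    H (G f) = G (H f) :=
  stmt0_general l s H G hH hG f
end

section
/- The l-contraction of a symmetric power of a covector against a symmetric product of vectors expands multinomially: g^{⊙l} ·_l (f_1^{⊙p_1} ⊙ ⋯ ⊙ f_N^{⊙p_N}) = Σ over multi-indices Q with |Q| = l and q_i ≤ p_i of (∏_{i=1}^N binom(p_i, q_i)) (g^{⊙l} ·_l (f_1^{⊙q_1} ⊙ ⋯ ⊙ f_N^{⊙q_N})) · f_1^{⊙(p_1−q_1)} ⊙ ⋯ ⊙ f_N^{⊙(p_N−q_N)}. -/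
namespace Polynomial
open Finset

variable {R ι : Type*} [CommSemiring R] [Fintype ι] [DecidableEq ι]

theorem C_mul_X_add_C_pow (a b : R) (n : ℕ) :
    (C a * X + C b) ^ n =
      ∑ k : Fin (n + 1), C (n.choose k * a ^ (k : ℕ) * b ^ (n - k)) * X ^ (k : ℕ) := by
  rw [add_pow, ← Fin.sum_univ_eq_sum_range]
  refine sum_congr rfl fun k _ => ?_
  simp only [map_mul, map_pow, map_natCast]
  ring

theorem coeff_prod_C_mul_X_add_C_pow (a b : ι → R) (p : ι → ℕ) (l : ℕ) :
    (∏ i, (C (a i) * X + C (b i)) ^ p i).coeff l =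
      ∑ q : ∀ i, Fin (p i + 1), if ∑ i, (q i : ℕ) = l then
        ∏ i, (p i).choose (q i) * a i ^ (q i : ℕ) * b i ^ (p i - q i) else 0 := by
  simp_rw [C_mul_X_add_C_pow, Fintype.prod_sum, prod_mul_distrib, ← map_prod,
    prod_pow_eq_pow_sum, finsetSum_coeff, coeff_C_mul_X_pow, eq_comm]
  simp only [prod_mul_distrib]

theorem coeff_prod_C_mul_X_add_C_pow_sum (a b : ι → R) (p : ι → ℕ) :
    (∏ i, (C (a i) * X + C (b i)) ^ p i).coeff (∑ i, p i) = ∏ i, a i ^ p i := by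
  rw [coeff_prod_C_mul_X_add_C_pow, Fintype.sum_eq_single (fun i => Fin.last (p i))]
  · simp
  · intro q hq
    rw [if_neg]
    contrapose! hq
    funext i
    exact Fin.ext ((sum_eq_sum_iff_of_le fun i _ => Fin.is_le (q i)).mp hq i (mem_univ i))

end Polynomial

section Contraction
open MvPolynomial

variable {d : ℕ} (g : Fin d → ℝ)

theorem Dop_apply (φ : MvPolynomial (Fin d) ℝ) : Dop g φ = ∑ x, g x • pderiv x φ := by
  simp [Dop, LinearMap.sum_apply]

theorem Dop_mul (φ ψ : MvPolynomial (Fin d) ℝ) :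
    Dop g (φ * ψ) = Dop g φ * ψ + φ * Dop g ψ := by
  simp only [Dop_apply, Derivation.leibniz, smul_add, Finset.sum_add_distrib, Finset.sum_mul,
    Finset.mul_sum, smul_eq_mul, mul_smul_comm, smul_mul_assoc, mul_comm ψ, add_comm]

theorem Dop_C (r : ℝ) : Dop g (C r) = 0 := by
  simp [Dop_apply]

theorem Dop_X (x : Fin d) : Dop g (X x) = C (g x) := by
  simp [Dop_apply, pderiv_X, Pi.single_apply, smul_eq_C_mul]

noncomputable def shiftAlong :
    MvPolynomial (Fin d) ℝ →ₐ[ℝ] Polynomial (MvPolynomial (Fin d) ℝ) :=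
  aeval fun x => Polynomial.C (C (g x)) * Polynomial.X + Polynomial.C (X x)

theorem derivative_shiftAlong (φ : MvPolynomial (Fin d) ℝ) :
    Polynomial.derivative (shiftAlong g φ) = shiftAlong g (Dop g φ) := by
  induction φ using MvPolynomial.induction_on with
  | C r => simp [shiftAlong, Dop_C]
  | add φ ψ hφ hψ => simp only [map_add, hφ, hψ]
  | mul_X φ x hφ =>
    rw [map_mul, Polynomial.derivative_mul, hφ, Dop_mul, Dop_X, map_add, map_mul, map_mul]
    simp [shiftAlong]

theorem iterate_derivative_shiftAlong (l : ℕ) (φ : MvPolynomial (Fin d) ℝ) :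
    Polynomial.derivative^[l] (shiftAlong g φ) = shiftAlong g ((Dop g ^ l) φ) := by
  rw [Module.End.pow_apply]
  exact (Function.Semiconj.iterate_right (fun ψ => (derivative_shiftAlong g ψ).symm) l φ).symm

theorem coeff_zero_shiftAlong (φ : MvPolynomial (Fin d) ℝ) : (shiftAlong g φ).coeff 0 = φ := by
  induction φ using MvPolynomial.induction_on with
  | C r => simp [shiftAlong]
  | add φ ψ hφ hψ => simp only [map_add, Polynomial.coeff_add, hφ, hψ]
  | mul_X φ x hφ =>
    rw [Polynomial.coeff_zero_eq_eval_zero] at hφ ⊢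
    rw [map_mul, Polynomial.eval_mul, hφ]
    simp [shiftAlong]

theorem coeff_shiftAlong (l : ℕ) (φ : MvPolynomial (Fin d) ℝ) :
    (shiftAlong g φ).coeff l = ((l.factorial : ℝ)⁻¹) • (Dop g ^ l) φ := by
  have h := Polynomial.coeff_iterate_derivative (k := l) (shiftAlong g φ) 0
  rw [iterate_derivative_shiftAlong, coeff_zero_shiftAlong, zero_add, Nat.descFactorial_self] at h
  rw [h, ← Nat.cast_smul_eq_nsmul ℝ, smul_smul, inv_mul_cancel₀ (by positivity), one_smul]

theorem shiftAlong_lin (f : Fin d → ℝ) :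
    shiftAlong g (lin f) =
      Polynomial.C (C (∑ x, g x * f x)) * Polynomial.X + Polynomial.C (lin f) := by
  simp only [shiftAlong, lin, map_sum, map_mul, aeval_C, aeval_X, Polynomial.algebraMap_apply,
    algebraMap_eq, mul_add, Finset.sum_add_distrib, ← mul_assoc, Finset.sum_mul]
  simp only [← map_mul, mul_comm (f _)]

theorem inv_factorial_smul_Dop_pow_prod_lin_pow {N : ℕ} (f : Fin N → Fin d → ℝ)
    (p : Fin N → ℕ) (l : ℕ) :
    ((l.factorial : ℝ)⁻¹) • (Dop g ^ l) (∏ i, lin (f i) ^ p i) =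
      ∑ q : ∀ i, Fin (p i + 1), if ∑ i, (q i : ℕ) = l then
        ∏ i, ((p i).choose (q i) : MvPolynomial (Fin d) ℝ) *
          C (∑ x, g x * f i x) ^ (q i : ℕ) * lin (f i) ^ (p i - q i)
      else 0 := by
  simp_rw [← coeff_shiftAlong, map_prod, map_pow, shiftAlong_lin]
  exact Polynomial.coeff_prod_C_mul_X_add_C_pow _ _ _ _

theorem inv_factorial_smul_Dop_pow_prod_lin_pow_of_sum_eq {N : ℕ} (f : Fin N → Fin d → ℝ)
    {q : Fin N → ℕ} {l : ℕ} (hq : ∑ i, q i = l) :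
    ((l.factorial : ℝ)⁻¹) • (Dop g ^ l) (∏ i, lin (f i) ^ q i) =
      ∏ i, C (∑ x, g x * f i x) ^ q i := by
  simp_rw [← coeff_shiftAlong, map_prod, map_pow, shiftAlong_lin, ← hq]
  exact Polynomial.coeff_prod_C_mul_X_add_C_pow_sum _ _ _

end Contraction

theorem stmt3_general {d N : ℕ} (g : Fin d → ℝ) (f : Fin N → Fin d → ℝ)
    (p : Fin N → ℕ) (l : ℕ) :
    (((l.factorial : ℝ)⁻¹) • (Dop g) ^ l) (∏ i, (lin (f i)) ^ (p i))
      = ∑ q : (∀ i, Fin (p i + 1)),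
          if (∑ i, ((q i : ℕ))) = l then
            (∏ i, (((p i).choose ((q i : ℕ))) : ℝ)) •
              ((((l.factorial : ℝ)⁻¹) • (Dop g) ^ l) (∏ i, (lin (f i)) ^ ((q i : ℕ))) *
                ∏ i, (lin (f i)) ^ (p i - (q i : ℕ)))
          else 0 := by
  rw [LinearMap.smul_apply, inv_factorial_smul_Dop_pow_prod_lin_pow]
  refine Finset.sum_congr rfl fun q _ => ?_
  split_ifs with hq
  · rw [LinearMap.smul_apply, inv_factorial_smul_Dop_pow_prod_lin_pow_of_sum_eq g f hq,
      Finset.prod_mul_distrib, Finset.prod_mul_distrib, MvPolynomial.smul_eq_C_mul, map_prod,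
      mul_assoc]
    simp only [map_natCast]
  · rfl

/-- Multinomial expansion of the `l`-contraction of `g^{⊙l}` against a
symmetric product of vector powers; the sum is over multi-indices `Q` with `|Q| = l`
and `q_i ≤ p_i` (encoded as `q : ∀ i, Fin (p i + 1)` with `∑ i, q i = l`). -/
theorem stmt3 {d N : ℕ} (g : Fin d → ℝ) (f : Fin N → Fin d → ℝ)
    (p : Fin N → ℕ) (l : ℕ) (hl : l ≤ ∑ i, p i) :
    (((l.factorial : ℝ)⁻¹) • (Dop g) ^ l) (∏ i, (lin (f i)) ^ (p i))
      = ∑ q : (∀ i, Fin (p i + 1)),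
          if (∑ i, ((q i : ℕ))) = l then
            (∏ i, (((p i).choose ((q i : ℕ))) : ℝ)) •
              ((((l.factorial : ℝ)⁻¹) • (Dop g) ^ l) (∏ i, (lin (f i)) ^ ((q i : ℕ))) *
                ∏ i, (lin (f i)) ^ (p i - (q i : ℕ)))
          else 0 :=
  stmt3_general g f p l
end

section
/- Let W, W′, V be real vector spaces carrying linear ℝ⁺-representations, with an ℝ⁺-equivariant bilinear product W × W′ → V (i.e. F_λ F′_λ = (FF′)_λ). If F ∈ W has almost homogeneous degree k and order l, and F′ ∈ W′ has almost homogeneous degree k′ and order l′, then FF′ ∈ V has almost homogeneous degree k + k′ and order l + l′. -/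
/-!
Write `F_λ = λ^k ∑_{i ≤ l} (log λ)^i G_i` with `G_0 = F` and `G_i` almost homogeneous of
order `l - i`, and similarly for `F'`. By equivariance and bilinearity,
`(F F')_λ = λ^(k+k') ∑_{m ≤ l+l'} (log λ)^m H_m` with `H_m = ∑_{i+j=m} G_i G'_j`. For `m ≥ 1`
each `G_i G'_j` has total order `l + l' - m < l + l'`, so by strong induction on `l + l'` it is
almost homogeneous of degree `k + k'` and order `l + l' - m`, and so is the sum `H_m`.
-/

def AlmostHomog {W : Type*} [AddCommGroup W] [Module ℝ W]
    (act : ℝ → W →ₗ[ℝ] W) (k : ℝ) : ℕ → W → Prop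
  | l, F => ∃ G : Fin l → W,
      (∀ j : Fin l, AlmostHomog act k (l - ((j : ℕ) + 1)) (G j)) ∧
      ∀ lam : ℝ, 0 < lam →
        act lam F = lam ^ k • F +
          lam ^ k • ∑ j : Fin l, (Real.log lam) ^ ((j : ℕ) + 1) • G j
  termination_by l => l
  decreasing_by have := j.isLt; omega

open Finset

namespace LinearMap

variable {R M N P : Type*} [CommSemiring R] [AddCommMonoid M] [Module R M]
  [AddCommMonoid N] [Module R N] [AddCommMonoid P] [Module R P]

def cauchyCoeff {a b : ℕ} (B : M →ₗ[R] N →ₗ[R] P) (u : Fin (a + 1) → M) (v : Fin (b + 1) → N)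
    (m : ℕ) : P :=
  ∑ p : Fin (a + 1) × Fin (b + 1) with (p.1 : ℕ) + p.2 = m, B (u p.1) (v p.2)

theorem cauchyCoeff_zero {a b : ℕ} (B : M →ₗ[R] N →ₗ[R] P) (u : Fin (a + 1) → M)
    (v : Fin (b + 1) → N) : cauchyCoeff B u v 0 = B (u 0) (v 0) := by
  rw [cauchyCoeff, sum_eq_single_of_mem (0, 0) (by simp)]
  rintro ⟨i, j⟩ hij hne
  have hsum : (i : ℕ) + j = 0 := (mem_filter.1 hij).2
  simp only [ne_eq, Prod.mk.injEq, Fin.ext_iff, Fin.val_zero] at hne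
  omega

theorem map_sum_pow_smul_sum_pow_smul {a b : ℕ} (B : M →ₗ[R] N →ₗ[R] P) (x : R)
    (u : Fin (a + 1) → M) (v : Fin (b + 1) → N) :
    B (∑ i : Fin (a + 1), x ^ (i : ℕ) • u i) (∑ j : Fin (b + 1), x ^ (j : ℕ) • v j) =
      ∑ m : Fin (a + b + 1), x ^ (m : ℕ) • cauchyCoeff B u v m := by
  let deg : Fin (a + 1) × Fin (b + 1) → Fin (a + b + 1) :=
    fun p => ⟨p.1 + p.2, by omega⟩
  calc B (∑ i : Fin (a + 1), x ^ (i : ℕ) • u i) (∑ j : Fin (b + 1), x ^ (j : ℕ) • v j)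
      = ∑ p : Fin (a + 1) × Fin (b + 1), x ^ ((p.1 : ℕ) + p.2) • B (u p.1) (v p.2) := by
        rw [Fintype.sum_prod_type, map_sum B, sum_apply]
        refine sum_congr rfl fun i _ => ?_
        rw [map_smul, smul_apply, map_sum, smul_sum]
        refine sum_congr rfl fun j _ => ?_
        rw [map_smul, smul_smul, pow_add]
    _ = ∑ m, ∑ p with deg p = m, x ^ ((p.1 : ℕ) + p.2) • B (u p.1) (v p.2) :=
        (sum_fiberwise _ deg _).symm
    _ = ∑ m : Fin (a + b + 1), x ^ (m : ℕ) • cauchyCoeff B u v m := by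
        refine Fintype.sum_congr _ _ fun m => ?_
        rw [cauchyCoeff, smul_sum]
        refine sum_congr (by simp [deg, Fin.ext_iff]) fun p hp => ?_
        rw [(mem_filter.1 hp).2]

end LinearMap

section AlmostHomog

variable {W : Type*} [AddCommGroup W] [Module ℝ W] {act : ℝ → W →ₗ[ℝ] W} {k : ℝ}

theorem almostHomog_iff_expansion {l : ℕ} {F : W} :
    AlmostHomog act k l F ↔ ∃ G : Fin (l + 1) → W, G 0 = F ∧
      (∀ j : Fin l, AlmostHomog act k (l - (j + 1)) (G j.succ)) ∧
      ∀ lam : ℝ, 0 < lam →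
        act lam F = lam ^ k • ∑ j : Fin (l + 1), Real.log lam ^ (j : ℕ) • G j := by
  rw [AlmostHomog]
  constructor
  · rintro ⟨G, hG, hact⟩
    refine ⟨Fin.cons F G, rfl, by simpa using hG, fun lam hlam => ?_⟩
    simp [hact lam hlam, Fin.sum_univ_succ, smul_add]
  · rintro ⟨G, rfl, hG, hact⟩
    refine ⟨Fin.tail G, hG, fun lam hlam => ?_⟩
    simp [hact lam hlam, Fin.sum_univ_succ, Fin.tail, smul_add]

theorem almostHomog_zero (l : ℕ) : AlmostHomog act k l (0 : W) := by
  induction l using Nat.strong_induction_on with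
  | _ l ih =>
    rw [AlmostHomog]
    exact ⟨0, fun j => ih _ (by omega), fun lam _ => by simp⟩

theorem AlmostHomog.add {l : ℕ} {F₁ F₂ : W} (h₁ : AlmostHomog act k l F₁)
    (h₂ : AlmostHomog act k l F₂) : AlmostHomog act k l (F₁ + F₂) := by
  induction l using Nat.strong_induction_on generalizing F₁ F₂ with
  | _ l ih =>
    rw [AlmostHomog] at h₁ h₂ ⊢
    obtain ⟨G₁, hG₁, hact₁⟩ := h₁
    obtain ⟨G₂, hG₂, hact₂⟩ := h₂
    refine ⟨G₁ + G₂, fun j => ih _ (by omega) (hG₁ j) (hG₂ j), fun lam hlam => ?_⟩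
    simp only [map_add, hact₁ lam hlam, hact₂ lam hlam, Pi.add_apply, smul_add,
      sum_add_distrib]
    abel

theorem AlmostHomog.sum {ι : Type*} {l : ℕ} {s : Finset ι} {F : ι → W}
    (h : ∀ i ∈ s, AlmostHomog act k l (F i)) : AlmostHomog act k l (∑ i ∈ s, F i) := by
  classical
  induction s using Finset.induction_on with
  | empty => simpa using almostHomog_zero l
  | insert i s hi ih =>
    rw [sum_insert hi]
    exact (h i (mem_insert_self i s)).add (ih fun j hj => h j (mem_insert_of_mem hj))

end AlmostHomog

/-- If a bilinear product `B : W × W' → V` is `ℝ⁺`-equivariant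
(`F_λ F'_λ = (F F')_λ`), `F ∈ W` has almost homogeneous degree `k` and order `l`, and
`F' ∈ W'` has almost homogeneous degree `k'` and order `l'`, then `B F F' ∈ V` has
almost homogeneous degree `k + k'` and order `l + l'`. -/
theorem stmt7 {W W' V : Type*} [AddCommGroup W] [Module ℝ W]
    [AddCommGroup W'] [Module ℝ W'] [AddCommGroup V] [Module ℝ V]
    (actW : ℝ → W →ₗ[ℝ] W) (actW' : ℝ → W' →ₗ[ℝ] W') (actV : ℝ → V →ₗ[ℝ] V)
    (B : W →ₗ[ℝ] W' →ₗ[ℝ] V)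
    (hequiv : ∀ lam : ℝ, 0 < lam → ∀ (x : W) (y : W'),
      actV lam (B x y) = B (actW lam x) (actW' lam y))
    (k k' : ℝ) (l l' : ℕ) (F : W) (F' : W')
    (hF : AlmostHomog actW k l F) (hF' : AlmostHomog actW' k' l' F') :
    AlmostHomog actV (k + k') (l + l') (B F F') := by
  induction hn : l + l' using Nat.strong_induction_on generalizing l l' F F' with
  | _ n ih =>
  subst hn
  obtain ⟨G, rfl, hG, hexp⟩ := almostHomog_iff_expansion.1 hF
  obtain ⟨G', rfl, hG', hexp'⟩ := almostHomog_iff_expansion.1 hF'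
  have hG_all : ∀ i : Fin (l + 1), AlmostHomog actW k (l - i) (G i) :=
    Fin.cases (by simpa using hF) fun i => by simpa using hG i
  have hG'_all : ∀ j : Fin (l' + 1), AlmostHomog actW' k' (l' - j) (G' j) :=
    Fin.cases (by simpa using hF') fun j => by simpa using hG' j
  refine almostHomog_iff_expansion.2
    ⟨fun m => B.cauchyCoeff G G' m, B.cauchyCoeff_zero G G', fun m => ?_, fun lam hlam => ?_⟩
  · refine AlmostHomog.sum fun p hp => ?_
    have hdeg : (p.1 : ℕ) + p.2 = m + 1 := by simpa using hp
    convert ih _ (by omega) _ _ _ _ (hG_all p.1) (hG'_all p.2) rfl using 2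
    omega
  · rw [hequiv lam hlam, hexp lam hlam, hexp' lam hlam, map_smul, map_smul, LinearMap.smul_apply,
      smul_smul, ← Real.rpow_add hlam, add_comm k', LinearMap.map_sum_pow_smul_sum_pow_smul]
end

section
/- Let F : Z → W be a smooth function on an open set Z satisfying (L_e − k)^{l+1} F = 0, where e is a vector field whose flow rescales a distinguished positive coordinate function g by L_e g^{−1/(2n)} = g^{−1/(2n)}. Then there exist unique smooth functions B_0, …, B_l on Z, each annihilated by L_e (homogeneous of degree 0), such that F = g^{−k/(2n)} Σ_{j=0}^l log^j(g^{−1/(2n)}) B_j. -/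
/-- The Lie derivative along the (complete) vector field `e` whose flow is `φ`:
`(L_e u)(z) = d/dt|₀ u(φ_t z)`. -/
noncomputable def lieD {Z W : Type*} [NormedAddCommGroup W] [NormedSpace ℝ W]
    (φ : ℝ → Z → Z) (u : Z → W) : Z → W :=
  fun z => deriv (fun t => u (φ t z)) 0


open Finset Function
open scoped ContDiff

section helpers
variable {W : Type*} [NormedAddCommGroup W] [NormedSpace ℝ W]

lemma hone : (∞ : WithTop ℕ∞) ≠ 0 := by simp

lemma iterDeriv_shift : ∀ (j : ℕ) (f : ℝ → W) (a x : ℝ),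
    deriv^[j] (fun y => f (y + a)) x = deriv^[j] f (x + a)
  | 0, f, a, x => rfl
  | j+1, f, a, x => by
    rw [Function.iterate_succ_apply', Function.iterate_succ_apply']
    have h : deriv^[j] (fun y => f (y + a)) = fun x => deriv^[j] f (x + a) :=
      funext fun x => iterDeriv_shift j f a x
    rw [h, deriv_comp_add_const]

lemma iterDeriv_const_smul : ∀ (j : ℕ) (a : ℝ) (f : ℝ → W), ContDiff ℝ ∞ f → ∀ (x : ℝ),
    deriv^[j] (fun y => a • f y) x = a • deriv^[j] f x
  | 0, a, f, _, x => rfl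
  | j+1, a, f, hf, x => by
    rw [Function.iterate_succ_apply', Function.iterate_succ_apply']
    have h : deriv^[j] (fun y => a • f y) = fun x => a • deriv^[j] f x :=
      funext fun x => iterDeriv_const_smul j a f hf x
    rw [h]
    exact deriv_const_smul a ((ContDiff.iterate_deriv j hf).differentiable hone x)

lemma taylor0 (m : ℕ) : ∀ (f : ℝ → W), ContDiff ℝ ∞ f → deriv^[m] f = (fun _ => 0) →
    ∀ x : ℝ, f x = ∑ j ∈ Finset.range m, (x ^ j / (j.factorial : ℝ)) • deriv^[j] f 0 := by
  induction m with
  | zero =>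
    intro f _ h0 x
    rw [show f x = 0 from congrFun h0 x]
    simp
  | succ m ih =>
    intro f hf h0 x
    obtain ⟨hdf, hf'⟩ := contDiff_infty_iff_deriv.mp hf
    have h0' : deriv^[m] (deriv f) = fun _ => 0 := by
      rw [← Function.iterate_succ_apply]; exact h0
    have IH := ih (deriv f) hf' h0'
    have hIH : ∀ y : ℝ, deriv f y
        = ∑ j ∈ Finset.range m, (y ^ j / (j.factorial : ℝ)) • deriv^[j+1] f 0 := by
      intro y
      rw [IH y]
      exact Finset.sum_congr rfl fun j _ => by
        rw [show deriv^[j+1] f = deriv^[j] (deriv f) from Function.iterate_succ_apply deriv j f]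
    set G : ℝ → W := fun x => ∑ j ∈ Finset.range (m+1), (x ^ j / (j.factorial : ℝ)) • deriv^[j] f 0
      with hGdef
    have hG : ∀ y : ℝ, HasDerivAt G (deriv f y) y := by
      intro y
      have h1 : HasDerivAt G
          (∑ j ∈ Finset.range (m+1), (((j:ℝ) * y ^ (j-1)) / (j.factorial : ℝ)) • deriv^[j] f 0) y := by
        apply HasDerivAt.fun_sum
        intro j _
        exact ((hasDerivAt_pow j y).div_const _).smul_const _
      convert h1 using 1
      rw [Finset.sum_range_succ']
      simp only [Nat.cast_zero, zero_mul, zero_div, zero_smul, add_zero]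
      rw [hIH y]
      apply Finset.sum_congr rfl
      intro j _
      congr 1
      rw [Nat.factorial_succ, Nat.add_sub_cancel]
      have hj : ((j.factorial : ℝ)) ≠ 0 := Nat.cast_ne_zero.2 j.factorial_ne_zero
      push_cast
      field_simp
    have hzero : ∀ y : ℝ, deriv (fun x => f x - G x) y = 0 := by
      intro y
      rw [(((hdf y).hasDerivAt).fun_sub (hG y)).deriv, sub_self]
    have hdiff : Differentiable ℝ (fun x => f x - G x) :=
      fun y => ((hdf y).sub (hG y).differentiableAt)
    have hconst := is_const_of_deriv_eq_zero hdiff hzero x 0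
    have hG0 : G 0 = f 0 := by
      show (∑ j ∈ Finset.range (m+1), ((0:ℝ) ^ j / (j.factorial : ℝ)) • deriv^[j] f 0) = f 0
      rw [Finset.sum_eq_single 0 (fun j _ hj => by simp [zero_pow hj])
        (fun h => absurd (Finset.mem_range.2 (Nat.succ_pos m)) h)]
      simp
    have hfx : f x - G x = 0 := by
      rw [hconst, hG0, sub_self]
    exact sub_eq_zero.mp hfx

lemma taylorA (m : ℕ) (f : ℝ → W) (hf : ContDiff ℝ ∞ f) (h0 : deriv^[m] f = fun _ => 0)
    (a x : ℝ) :
    f x = ∑ j ∈ Finset.range m, ((x - a) ^ j / (j.factorial : ℝ)) • deriv^[j] f a := by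
  have hfa : ContDiff ℝ ∞ (fun y => f (y + a)) := hf.comp (contDiff_id.add contDiff_const)
  have h0a : deriv^[m] (fun y => f (y + a)) = fun _ => 0 := funext fun y => by
    rw [iterDeriv_shift]; exact congrFun h0 _
  have h := taylor0 m _ hfa h0a (x - a)
  simp only [iterDeriv_shift, sub_add_cancel, zero_add] at h
  exact h

lemma polyzero : ∀ (m : ℕ) (c : ℕ → W),
    (∀ s : ℝ, s ≠ 0 → ∑ i ∈ Finset.range m, s ^ i • c i = 0) → ∀ i < m, c i = 0 := by
  intro m
  induction m with
  | zero => intro c _ i hi; exact absurd hi (Nat.not_lt_zero i)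
  | succ m ih =>
    intro c hc
    have hcont : Continuous (fun s : ℝ => ∑ i ∈ Finset.range (m+1), s ^ i • c i) :=
      continuous_finset_sum _ fun i _ => (continuous_pow i).smul continuous_const
    have h0 : c 0 = 0 := by
      have ht1 : Filter.Tendsto (fun s : ℝ => ∑ i ∈ Finset.range (m+1), s ^ i • c i)
          (nhdsWithin 0 {(0:ℝ)}ᶜ) (nhds (∑ i ∈ Finset.range (m+1), (0:ℝ) ^ i • c i)) :=
        (hcont.tendsto 0).mono_left nhdsWithin_le_nhds
      have heq : (fun s : ℝ => ∑ i ∈ Finset.range (m+1), s ^ i • c i)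
          =ᶠ[nhdsWithin 0 {(0:ℝ)}ᶜ] (fun _ => (0:W)) := by
        filter_upwards [self_mem_nhdsWithin] with s hs using hc s hs
      have ht2 : Filter.Tendsto (fun s : ℝ => ∑ i ∈ Finset.range (m+1), s ^ i • c i)
          (nhdsWithin 0 {(0:ℝ)}ᶜ) (nhds 0) := Filter.Tendsto.congr' heq.symm tendsto_const_nhds
      have hkey := tendsto_nhds_unique ht1 ht2
      rwa [Finset.sum_eq_single 0 (fun j _ hj => by simp [zero_pow hj])
        (fun h => absurd (Finset.mem_range.2 (Nat.succ_pos m)) h), pow_zero, one_smul] at hkey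
    have htail : ∀ s : ℝ, s ≠ 0 → ∑ i ∈ Finset.range m, s ^ i • c (i+1) = 0 := by
      intro s hs
      have h1 := hc s hs
      rw [Finset.sum_range_succ', h0, smul_zero, add_zero] at h1
      have h2 : ∑ i ∈ Finset.range m, s ^ (i+1) • c (i+1)
          = s • ∑ i ∈ Finset.range m, s ^ i • c (i+1) := by
        rw [Finset.smul_sum]
        exact Finset.sum_congr rfl fun i _ => by rw [smul_smul, ← pow_succ']
      rw [h2] at h1
      exact (smul_eq_zero.mp h1).resolve_left hs
    intro i hi
    cases i with
    | zero => exact h0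
    | succ i => exact ih (fun i => c (i+1)) htail i (Nat.lt_of_succ_lt_succ hi)

end helpers

section auxdefs
variable {Z W : Type*} [NormedAddCommGroup W] [NormedSpace ℝ W]

/-- auxiliary: `τ(z) = -(1/(2n)) log g(z)`. -/
noncomputable def tauf (n : ℕ) (g : Z → ℝ) (z : Z) : ℝ :=
  -(1 / (2 * (n : ℝ))) * Real.log (g z)

/-- auxiliary: `Q_z(t) = e^{-kt} • F(φ_t z)`. -/
noncomputable def Qf (φ : ℝ → Z → Z) (k : ℝ) (F : Z → W) (z : Z) (t : ℝ) : W :=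
  Real.exp (-(k * t)) • F (φ t z)

/-- auxiliary: the coefficient functions. -/
noncomputable def Bf (φ : ℝ → Z → Z) (n : ℕ) (g : Z → ℝ) (k : ℝ) (F : Z → W)
    (j : ℕ) (z : Z) : W :=
  (Real.exp (-(k * tauf n g z)) / (j.factorial : ℝ)) • deriv^[j] (Qf φ k F z) (-(tauf n g z))

end auxdefs


/-- Let `e` be the scaling vector field (with flow `φ`) on `Z`, and let
the positive function `g` satisfy `L_e g^{-1/(2n)} = g^{-1/(2n)}` (integrated form:
`g(φ_t z) = e^{-2nt} g(z)`).  If a smooth function `F : Z → W` satisfies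
`(L_e − k)^{l+1} F = 0`, then there exist unique functions `B_0, …, B_l`, each constant
along every integral curve of `e` (i.e. annihilated by `L_e`, homogeneous of degree 0),
such that `F = g^{−k/(2n)} Σ_{j=0}^l log^j(g^{−1/(2n)}) B_j`. -/
theorem stmt9 {Z W : Type*} [NormedAddCommGroup W] [NormedSpace ℝ W]
    (φ : ℝ → Z → Z) (hφ0 : ∀ z, φ 0 z = z)
    (hφ : ∀ s t z, φ s (φ t z) = φ (s + t) z)
    (n : ℕ) (hn : 1 ≤ n) (g : Z → ℝ) (hgpos : ∀ z, 0 < g z)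
    (hgflow : ∀ t z, g (φ t z) = Real.exp (-(2 * (n : ℝ)) * t) * g z)
    (k : ℝ) (l : ℕ) (F : Z → W)
    (hsmooth : ∀ z, ContDiff ℝ (⊤ : ℕ∞) (fun t => F (φ t z)))
    (hF : (fun u : Z → W => fun z => lieD φ u z - k • u z)^[l + 1] F = fun _ => 0) :
    ∃! B : Fin (l + 1) → Z → W,
      (∀ j t z, B j (φ t z) = B j z) ∧
      ∀ z, F z = (g z) ^ (-(k / (2 * (n : ℝ)))) •
        ∑ j : Fin (l + 1),
          (Real.log ((g z) ^ (-(1 / (2 * (n : ℝ)))))) ^ (j : ℕ) • B j z := by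
  classical
  have hnpos : (0:ℝ) < n := by exact_mod_cast Nat.lt_of_lt_of_le Nat.zero_lt_one hn
  have hn2 : (2 * (n:ℝ)) ≠ 0 := by positivity
  -- flow of τ
  have hτflow : ∀ s z, tauf n g (φ s z) = s + tauf n g z := by
    intro s z
    unfold tauf
    rw [hgflow, Real.log_mul (Real.exp_ne_zero _) (ne_of_gt (hgpos z)), Real.log_exp]
    field_simp
    ring
  have hQsmooth : ∀ z : Z, ContDiff ℝ ∞ (Qf φ k F z) := by
    intro z
    exact (Real.contDiff_exp.comp ((contDiff_const.mul contDiff_id).neg)).smul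
      ((hsmooth z).of_le (by simp))
  -- main claim: the operator iterate along the orbit
  have claimC : ∀ (z : Z) (m : ℕ) (t : ℝ),
      ((fun u : Z → W => fun z => lieD φ u z - k • u z)^[m] F) (φ t z)
        = Real.exp (k * t) • deriv^[m] (Qf φ k F z) t := by
    intro z m
    induction m with
    | zero =>
      intro t
      show F (φ t z) = Real.exp (k * t) • (Real.exp (-(k * t)) • F (φ t z))
      rw [smul_smul, ← Real.exp_add]
      simp
    | succ m ih =>
      intro t
      rw [Function.iterate_succ_apply']
      have hD : Differentiable ℝ (deriv^[m] (Qf φ k F z)) :=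
        (ContDiff.iterate_deriv m (hQsmooth z)).differentiable hone
      have hexp : HasDerivAt (fun s : ℝ => Real.exp (k * s)) (Real.exp (k * t) * k) t := by
        simpa [Function.comp_def] using (Real.hasDerivAt_exp (k * t)).comp t ((hasDerivAt_id t).const_mul k)
      have hsm : HasDerivAt (fun s : ℝ => Real.exp (k * s) • deriv^[m] (Qf φ k F z) s)
          (Real.exp (k * t) • deriv^[m+1] (Qf φ k F z) t
            + (Real.exp (k * t) * k) • deriv^[m] (Qf φ k F z) t) t := by
        have h := hexp.smul ((hD t).hasDerivAt)
        rwa [← Function.iterate_succ_apply' deriv m (Qf φ k F z)] at h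
      have hlie : lieD φ ((fun u : Z → W => fun z => lieD φ u z - k • u z)^[m] F) (φ t z)
          = Real.exp (k * t) • deriv^[m+1] (Qf φ k F z) t
            + (Real.exp (k * t) * k) • deriv^[m] (Qf φ k F z) t := by
        have h1 : (fun s => ((fun u : Z → W => fun z => lieD φ u z - k • u z)^[m] F)
              (φ s (φ t z)))
            = fun s => Real.exp (k * (s + t)) • deriv^[m] (Qf φ k F z) (s + t) := by
          funext s
          rw [hφ]
          exact ih (s + t)
        show deriv (fun s => ((fun u : Z → W => fun z => lieD φ u z - k • u z)^[m] F)
          (φ s (φ t z))) 0 = _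
        rw [h1, deriv_comp_add_const
          (f := fun s => Real.exp (k * s) • deriv^[m] (Qf φ k F z) s) (a := t) (x := 0),
          zero_add, hsm.deriv]
      rw [hlie, ih t, smul_smul]
      rw [mul_comm k (Real.exp (k * t))]
      abel
  -- vanishing of the (l+1)-st derivative of Q
  have hQtop : ∀ z, deriv^[l+1] (Qf φ k F z) = fun _ => 0 := by
    intro z
    funext t
    have h1 := claimC z (l+1) t
    rw [hF] at h1
    have h3 : Real.exp (k * t) • deriv^[l+1] (Qf φ k F z) t = 0 := h1.symm
    exact (smul_eq_zero.mp h3).resolve_left (Real.exp_ne_zero _)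
  -- Q flow
  have hQflow : ∀ s z, Qf φ k F (φ s z) = fun u => Real.exp (k * s) • Qf φ k F z (u + s) := by
    intro s z
    funext u
    unfold Qf
    rw [hφ, smul_smul, ← Real.exp_add,
      show k * s + -(k * (u + s)) = -(k * u) by ring]
  -- invariance of B
  have hBinv : ∀ (j : ℕ) (t : ℝ) (z : Z), Bf φ n g k F j (φ t z) = Bf φ n g k F j z := by
    intro j t z
    unfold Bf
    rw [hτflow, hQflow]
    have hsmQ : ContDiff ℝ ∞ (fun u => Qf φ k F z (u + t)) :=
      (hQsmooth z).comp (contDiff_id.add contDiff_const)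
    rw [show (fun u => Real.exp (k * t) • Qf φ k F z (u + t))
        = (fun u => Real.exp (k * t) • (fun v => Qf φ k F z (v + t)) u) from rfl]
    rw [iterDeriv_const_smul j _ _ hsmQ, iterDeriv_shift,
      show -(t + tauf n g z) + t = -(tauf n g z) by ring,
      smul_smul,
      show Real.exp (-(k * (t + tauf n g z))) / (j.factorial : ℝ) * Real.exp (k * t)
        = Real.exp (-(k * tauf n g z)) / (j.factorial : ℝ) by
        rw [div_mul_eq_mul_div, ← Real.exp_add,
          show -(k * (t + tauf n g z)) + k * t = -(k * tauf n g z) by ring]]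
  -- the representation
  have hrepr : ∀ z, F z = (g z) ^ (-(k / (2 * (n : ℝ)))) •
      ∑ j : Fin (l + 1),
        (Real.log ((g z) ^ (-(1 / (2 * (n : ℝ)))))) ^ (j : ℕ) • Bf φ n g k F (j : ℕ) z := by
    intro z
    have hlog : Real.log ((g z) ^ (-(1 / (2 * (n:ℝ))))) = tauf n g z :=
      Real.log_rpow (hgpos z) _
    have hrpow : (g z) ^ (-(k / (2 * (n:ℝ)))) = Real.exp (k * tauf n g z) := by
      rw [Real.rpow_def_of_pos (hgpos z)]
      congr 1
      unfold tauf
      ring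
    have hQ0 : F z = Qf φ k F z 0 := by
      unfold Qf
      rw [hφ0]
      simp
    have htay := taylorA (l+1) (Qf φ k F z) (hQsmooth z) (hQtop z) (-(tauf n g z)) 0
    rw [hlog, hrpow, hQ0, htay,
      ← Fin.sum_univ_eq_sum_range
        (fun j => ((0 - -(tauf n g z)) ^ j / (j.factorial : ℝ)) • deriv^[j] (Qf φ k F z)
          (-(tauf n g z))) (l+1),
      Finset.smul_sum]
    apply Finset.sum_congr rfl
    intro j _
    unfold Bf
    rw [smul_smul, smul_smul]
    congr 1
    rw [sub_neg_eq_add, zero_add]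
    have he : Real.exp (k * tauf n g z) * Real.exp (-(k * tauf n g z)) = 1 := by
      rw [← Real.exp_add]; simp
    rw [show Real.exp (k * tauf n g z) * (tauf n g z) ^ (j:ℕ)
          * (Real.exp (-(k * tauf n g z)) / ((j:ℕ).factorial : ℝ))
        = (Real.exp (k * tauf n g z) * Real.exp (-(k * tauf n g z)))
          * ((tauf n g z) ^ (j:ℕ) / ((j:ℕ).factorial : ℝ)) by ring, he, one_mul]
  refine ⟨fun j z => Bf φ n g k F (j : ℕ) z, ⟨fun j t z => hBinv (j : ℕ) t z, hrepr⟩, ?_⟩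
  intro B' hB'
  obtain ⟨hinv', hrep'⟩ := hB'
  funext j z
  set d : ℕ → W := fun i => if h : i < l + 1 then B' ⟨i, h⟩ z - Bf φ n g k F i z else 0 with hddef
  have hall : ∀ s : ℝ, ∑ i ∈ Finset.range (l+1), s ^ i • d i = 0 := by
    intro s
    have h1 := hrep' (φ (s - tauf n g z) z)
    have h2 := hrepr (φ (s - tauf n g z) z)
    have hτw : tauf n g (φ (s - tauf n g z) z) = s := by rw [hτflow]; ring
    have hlogw : Real.log ((g (φ (s - tauf n g z) z)) ^ (-(1 / (2 * (n:ℝ))))) = s := by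
      rw [Real.log_rpow (hgpos _)]
      exact hτw
    have hexpw : (g (φ (s - tauf n g z) z)) ^ (-(k / (2 * (n:ℝ)))) = Real.exp (k * s) := by
      rw [Real.rpow_def_of_pos (hgpos _)]
      rw [show Real.log (g (φ (s - tauf n g z) z)) * -(k / (2 * (n:ℝ)))
          = k * tauf n g (φ (s - tauf n g z) z) by unfold tauf; ring, hτw]
    rw [hexpw, hlogw] at h1 h2
    simp only [hinv'] at h1
    simp only [hBinv] at h2
    have h3 : (∑ j : Fin (l+1), s ^ (j:ℕ) • B' j z)
        = ∑ j : Fin (l+1), s ^ (j:ℕ) • Bf φ n g k F (j:ℕ) z :=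
      smul_right_injective W (Real.exp_ne_zero (k * s)) (h1.symm.trans h2)
    have h4 : ∑ i ∈ Finset.range (l+1), s ^ i • d i
        = ∑ j : Fin (l+1), (s ^ (j:ℕ) • B' j z - s ^ (j:ℕ) • Bf φ n g k F (j:ℕ) z) := by
      rw [← Fin.sum_univ_eq_sum_range (fun i => s ^ i • d i) (l+1)]
      apply Finset.sum_congr rfl
      intro i _
      rw [hddef]
      simp only [dif_pos i.isLt, Fin.eta, smul_sub]
    rw [h4, Finset.sum_sub_distrib, h3, sub_self]
  have hz := polyzero (l+1) d (fun s _ => hall s) (j : ℕ) j.isLt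
  rw [hddef] at hz
  simp only [dif_pos j.isLt, Fin.eta] at hz
  exact sub_eq_zero.mp hz
end
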